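/- arXiv:2506.14139 — 3 statements merged into one kernel-verified Lean document; each statement's English description precedes it below -/
import Mathlib

section
/- Let Q(x,y) = a x^2 + b x y + c y^2 be a primitive positive definite integral binary quadratic form of discriminant D = b^2 - 4ac with D < -4. Then the isotropy group of Q under the right action of SL_2(ℤ) (where Q^γ(v) = Q(γv)) is exactly {I, -I}. -/
open Matrix

/-- The value of the binary quadratic form `a x² + b x y + c y²`. -/
def qfVal (a b c x y : ℤ) : ℤ := a * x ^ 2 + b * x * y + c * y ^ 2

/-- For a primitive positive definite form of discriminant `D < -4`, the isotropy
group in `SL₂(ℤ)` (acting by `Q^γ(v) = Q(γ v)`) is exactly `{I, -I}`. -/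
theorem isotropy_eq_pm_one (a b c D : ℤ)
    (hprim : Int.gcd (Int.gcd a b) c = 1) (ha : 0 < a)
    (hD : D = b ^ 2 - 4 * a * c) (hD4 : D < -4)
    (γ : Matrix.SpecialLinearGroup (Fin 2) ℤ) :
    (∀ x y : ℤ,
        qfVal a b c (γ 0 0 * x + γ 0 1 * y) (γ 1 0 * x + γ 1 1 * y)
          = qfVal a b c x y)
      ↔ (γ = 1 ∨ γ = -1) := by
  constructor
  · intro h
    set p := γ 0 0 with hp
    set q := γ 0 1 with hq'
    set r := γ 1 0 with hr'
    set s := γ 1 1 with hs'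
    have hdet : p * s - q * r = 1 := by
      have := γ.2
      rw [Matrix.det_fin_two] at this
      exact this
    have h1 : a * p ^ 2 + b * p * r + c * r ^ 2 = a := by
      have := h 1 0; simp [qfVal] at this; linear_combination this
    have h2 : a * q ^ 2 + b * q * s + c * s ^ 2 = c := by
      have := h 0 1; simp [qfVal] at this; linear_combination this
    have h3 : 2 * a * p * q + b * (p * s + q * r) + 2 * c * r * s = b := by
      have := h 1 1; simp [qfVal] at this; linear_combination this - h1 - h2
    -- the three "automorph" identities
    have hF2 : a * q = -(c * r) := by
      have h2' : 2 * (a * q + c * r) = 0 := by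
        linear_combination s * h3 - 2 * r * h2 - (2 * a * q + b * s) * hdet
      linarith
    have hF1 : a * (s - p) = b * r := by
      have h1' : 2 * (a * (s - p) - b * r) = 0 := by
        linear_combination r * h3 - 2 * s * h1 + (2 * a * p + b * r) * hdet
      linarith
    -- a ∣ r
    have habr : a ∣ b * r := ⟨s - p, by linarith [hF1]⟩
    have hacr : a ∣ c * r := ⟨-q, by linarith [hF2]⟩
    have har : a ∣ r := by
      have hg1 : (Int.gcd a b : ℤ) = a * Int.gcdA a b + b * Int.gcdB a b :=
        Int.gcd_eq_gcd_ab a b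
      have hg2 : ((Int.gcd (Int.gcd a b) c : ℤ)) =
          (Int.gcd a b : ℤ) * Int.gcdA (Int.gcd a b) c + c * Int.gcdB (Int.gcd a b) c :=
        Int.gcd_eq_gcd_ab _ _
      have hone : (1 : ℤ) =
          (Int.gcd a b : ℤ) * Int.gcdA (Int.gcd a b) c + c * Int.gcdB (Int.gcd a b) c := by
        rw [← hg2, hprim]; norm_num
      have hrg : a ∣ r * (Int.gcd a b : ℤ) := by
        rw [hg1]
        have : r * (a * Int.gcdA a b + b * Int.gcdB a b)
            = a * (r * Int.gcdA a b) + (b * r) * Int.gcdB a b := by ring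
        rw [this]
        exact dvd_add (Dvd.intro _ rfl) (habr.mul_right _)
      have : r = (r * (Int.gcd a b : ℤ)) * Int.gcdA (Int.gcd a b) c
          + (c * r) * Int.gcdB (Int.gcd a b) c := by
        nth_rewrite 1 [show r = r * 1 by ring, hone]; ring
      rw [this]
      exact dvd_add (hrg.mul_right _) (hacr.mul_right _)
    obtain ⟨u, hu⟩ := har
    have ha0 : a ≠ 0 := ha.ne'
    have hs : s = p + b * u := by
      have : a * (s - p) = a * (b * u) := by rw [hF1, hu]; ring
      have := mul_left_cancel₀ ha0 this
      linarith
    have hq : q = -(c * u) := by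
      have : a * q = a * (-(c * u)) := by rw [hF2, hu]; ring
      exact mul_left_cancel₀ ha0 this
    have key : p ^ 2 + b * p * u + a * c * u ^ 2 = 1 := by
      rw [hs, hq, hu] at hdet
      linear_combination hdet
    have hD5 : D ≤ -5 := by omega
    have h5 : 4 * a * c - b ^ 2 ≥ 5 := by linarith [hD5, hD.ge, hD.le]
    have hu0 : u = 0 := by
      by_contra hne
      have hu1 : 1 ≤ u ^ 2 := by
        rcases lt_or_gt_of_ne hne with h' | h' <;> nlinarith
      nlinarith [sq_nonneg (2 * p + b * u), key, h5, hu1]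
    rw [hu0] at hs hq hu key
    have hq0 : q = 0 := by simpa using hq
    have hr0 : r = 0 := by simpa using hu
    have hsp : s = p := by simpa using hs
    have hp1 : p = 1 ∨ p = -1 := by
      have hfac : (p - 1) * (p + 1) = 0 := by linear_combination key
      rcases mul_eq_zero.mp hfac with h' | h'
      · left; linarith
      · right; linarith
    rcases hp1 with h' | h'
    · left
      apply Matrix.SpecialLinearGroup.ext
      intro i j
      fin_cases i <;> fin_cases j <;>
        simp [Matrix.SpecialLinearGroup.coe_one, ← hp, ← hq', ← hr', ← hs', h', hr0, hq0, hsp]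
    · right
      apply Matrix.SpecialLinearGroup.ext
      intro i j
      fin_cases i <;> fin_cases j <;>
        simp [Matrix.SpecialLinearGroup.coe_neg, Matrix.SpecialLinearGroup.coe_one,
          ← hp, ← hq', ← hr', ← hs', h', hr0, hq0, hsp]
  · rintro (rfl | rfl) <;> intro x y <;>
      simp [qfVal, Matrix.SpecialLinearGroup.coe_one, Matrix.SpecialLinearGroup.coe_neg,
        Matrix.one_apply, Matrix.one_fin_two]
end

section
/- For a positive integer N, the map sending a column vector (a, c) ∈ ℤ^2 with gcd(N, a, c) = 1 to the coset of any γ ∈ SL_2(ℤ) with first column congruent to (a, c) mod N induces a well-defined bijection from {(a,c) ∈ ℤ^2 : gcd(N,a,c)=1} modulo the equivalence (a,c) ~ (a',c') iff (a,c) ≡ ±(a',c') mod N, onto the set of left cosets SL_2(ℤ)/±Γ_1(N). -/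
open Matrix CongruenceSubgroup

/-- The subgroup `±Γ₁(N)` of `SL₂(ℤ)` generated by `Γ₁(N)` and `-I`. -/
def pmGamma1 (N : ℕ) : Subgroup (Matrix.SpecialLinearGroup (Fin 2) ℤ) :=
  Gamma1 N ⊔ Subgroup.zpowers (-1)

/-- Column vectors `(a, c) ∈ ℤ²` with `gcd(N, a, c) = 1`. -/
def PrimCol (N : ℕ) : Type :=
  {v : Fin 2 → ℤ // Int.gcd (N : ℤ) (Int.gcd (v 0) (v 1)) = 1}

/-- The relation `(a,c) ~ (a',c')` iff `(a,c) ≡ ±(a',c') (mod N)`. -/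
def colSetoid (N : ℕ) : Setoid (PrimCol N) :=
  ⟨fun v w => (∀ i, ((v.1 i : ZMod N)) = (w.1 i : ZMod N)) ∨
      (∀ i, ((v.1 i : ZMod N)) = -(w.1 i : ZMod N)),
    by
      constructor
      · intro v; left; intro i; rfl
      · rintro v w (h | h)
        · left; intro i; rw [h i]
        · right; intro i; rw [h i, neg_neg]
      · rintro u v w (h | h) (h' | h')
        · left; intro i; rw [h i, h' i]
        · right; intro i; rw [h i, h' i]
        · right; intro i; rw [h i, h' i]
        · left; intro i; rw [h i, h' i, neg_neg]⟩

/-! `SL₂(ℤ)` acts on `(ℤ/N)²` through reduction mod `N`, and `Γ₁(N)` is the stabiliser of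
`e₁ = (1, 0)`. Hence `γ⁻¹γ' ∈ Γ₁(N)` iff `γ` and `γ'` have the same first column mod `N`, and
`γ⁻¹γ' ∈ ±Γ₁(N)` iff these columns agree up to sign, so the first column mod `N` up to sign is
a well-defined injective function on `SL₂(ℤ)/±Γ₁(N)`. It hits every class: write
`(a, c) = g (a₀, c₀)` with `g = gcd(a, c)` prime to `N` and `a₀, c₀` coprime; if `α, β ∈ SL₂(ℤ)`
have first columns `(a₀, c₀)` and `(g, N)`, then `αβ` has first column `≡ (a, c) mod N`. -/

open scoped MatrixGroups

lemma Int.exists_isCoprime_mul_gcd (a c : ℤ) :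
    ∃ a₀ c₀ : ℤ, IsCoprime a₀ c₀ ∧ a = a₀ * Int.gcd a c ∧ c = c₀ * Int.gcd a c := by
  rcases (Int.gcd a c).eq_zero_or_pos with h | h
  · obtain ⟨rfl, rfl⟩ := Int.gcd_eq_zero_iff.1 h
    exact ⟨1, 0, isCoprime_one_left, by simp, by simp⟩
  · obtain ⟨a₀, c₀, hco, ha, hc⟩ := Int.exists_gcd_one h
    exact ⟨a₀, c₀, Int.isCoprime_iff_gcd_eq_one.2 hco, ha, hc⟩

lemma exists_SL2_col_intCast_eq (N : ℕ) {a c : ℤ} (h : Int.gcd N (Int.gcd a c) = 1) :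
    ∃ γ : SL(2, ℤ), ((γ 0 0 : ℤ) : ZMod N) = a ∧ ((γ 1 0 : ℤ) : ZMod N) = c := by
  obtain ⟨a₀, c₀, hco, ha, hc⟩ := Int.exists_isCoprime_mul_gcd a c
  have hgN : IsCoprime (Int.gcd a c : ℤ) N :=
    Int.isCoprime_iff_gcd_eq_one.2 (by rwa [Int.gcd_comm])
  obtain ⟨α, hα₀, hα₁⟩ := hco.exists_SL2_col 0
  obtain ⟨β, hβ₀, hβ₁⟩ := hgN.exists_SL2_col 0
  refine ⟨α * β, ?_, ?_⟩
  · rw [ha]; simp [Matrix.mul_apply, Fin.sum_univ_two, hα₀, hβ₀, hβ₁]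
  · rw [hc]; simp [Matrix.mul_apply, Fin.sum_univ_two, hα₁, hβ₀, hβ₁]

namespace Matrix.SpecialLinearGroup

variable {n R : Type*} [Fintype n] [DecidableEq n] [CommRing R]

lemma mem_sup_zpowers_neg_one_iff [Fact (Even (Fintype.card n))]
    {H : Subgroup (SpecialLinearGroup n R)} {g : SpecialLinearGroup n R} :
    g ∈ H ⊔ Subgroup.zpowers (-1) ↔ g ∈ H ∨ -g ∈ H := by
  refine ⟨fun hg => ?_, ?_⟩
  · let K : Subgroup (SpecialLinearGroup n R) :=
      { carrier := {g | g ∈ H ∨ -g ∈ H}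
        one_mem' := Or.inl H.one_mem
        mul_mem' := by
          rintro a b (ha | ha) (hb | hb)
          · exact Or.inl (H.mul_mem ha hb)
          · exact Or.inr (by simpa using H.mul_mem ha hb)
          · exact Or.inr (by simpa using H.mul_mem ha hb)
          · exact Or.inl (by simpa using H.mul_mem ha hb)
        inv_mem' := by
          rintro a (ha | ha)
          · exact Or.inl (H.inv_mem ha)
          · exact Or.inr (by simpa using H.inv_mem ha) }
    have hK : H ⊔ Subgroup.zpowers (-1) ≤ K :=
      sup_le (fun _ => Or.inl) (Subgroup.zpowers_le.2 (Or.inr (by simp)))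
    exact hK hg
  · rintro (hg | hg)
    · exact Subgroup.mem_sup_left hg
    · simpa using Subgroup.mul_mem_sup hg (Subgroup.mem_zpowers (-1))

lemma smul_single_zero (g : SL(2, R)) : g • (Pi.single 0 1 : Fin 2 → R) = fun i => g i 0 := by
  ext i
  simp [SpecialLinearGroup.smul_def]

lemma smul_single_zero_eq_self_iff (g : SL(2, R)) :
    g • (Pi.single 0 1 : Fin 2 → R) = Pi.single 0 1 ↔ g 0 0 = 1 ∧ g 1 1 = 1 ∧ g 1 0 = 0 := by
  have hdet : g 0 0 * g 1 1 - g 0 1 * g 1 0 = 1 := by rw [← det_fin_two, g.det_coe]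
  simp only [smul_single_zero, funext_iff, Fin.forall_fin_two, Pi.single_eq_same,
    Pi.single_eq_of_ne one_ne_zero]
  constructor
  · rintro ⟨h00, h10⟩
    rw [h00, h10] at hdet
    exact ⟨h00, by simpa using hdet, h10⟩
  · rintro ⟨h00, -, h10⟩
    exact ⟨h00, h10⟩

end Matrix.SpecialLinearGroup

open Matrix.SpecialLinearGroup

def firstColMod (N : ℕ) (γ : SL(2, ℤ)) : Fin 2 → ZMod N :=
  (γ : SL(2, ZMod N)) • Pi.single 0 1

lemma firstColMod_apply (N : ℕ) (γ : SL(2, ℤ)) (i : Fin 2) : firstColMod N γ i = γ i 0 := by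
  simp [firstColMod, smul_single_zero]

lemma firstColMod_neg (N : ℕ) (γ : SL(2, ℤ)) : firstColMod N (-γ) = -firstColMod N γ := by
  ext i
  simp [firstColMod_apply]

lemma mem_Gamma1_iff_firstColMod (N : ℕ) (γ : SL(2, ℤ)) :
    γ ∈ Gamma1 N ↔ firstColMod N γ = Pi.single 0 1 := by
  rw [Gamma1_mem, firstColMod, smul_single_zero_eq_self_iff]
  simp

lemma inv_mul_mem_Gamma1_iff (N : ℕ) (γ γ' : SL(2, ℤ)) :
    γ⁻¹ * γ' ∈ Gamma1 N ↔ firstColMod N γ' = firstColMod N γ := by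
  simp only [mem_Gamma1_iff_firstColMod, firstColMod, map_mul, map_inv, mul_smul,
    inv_smul_eq_iff]

lemma inv_mul_mem_pmGamma1_iff (N : ℕ) (γ γ' : SL(2, ℤ)) :
    γ⁻¹ * γ' ∈ pmGamma1 N ↔
      firstColMod N γ = firstColMod N γ' ∨ firstColMod N γ = -firstColMod N γ' := by
  rw [pmGamma1, mem_sup_zpowers_neg_one_iff, ← mul_neg, inv_mul_mem_Gamma1_iff,
    inv_mul_mem_Gamma1_iff, firstColMod_neg, eq_comm, @eq_comm _ (-_)]

namespace PrimCol

def ofSL (N : ℕ) (γ : SL(2, ℤ)) : PrimCol N :=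
  ⟨fun i => γ i 0, by simp [Int.isCoprime_iff_gcd_eq_one.1 (isCoprime_col γ 0)]⟩

variable {N : ℕ}

def reduce (v : PrimCol N) : Fin 2 → ZMod N := fun i => v.1 i

lemma reduce_ofSL (γ : SL(2, ℤ)) : (ofSL N γ).reduce = firstColMod N γ :=
  funext fun i => (firstColMod_apply N γ i).symm

lemma mk_eq_mk_iff {v w : PrimCol N} :
    Quotient.mk (colSetoid N) v = Quotient.mk (colSetoid N) w ↔
      v.reduce = w.reduce ∨ v.reduce = -w.reduce := by
  rw [Quotient.eq]
  simp only [funext_iff]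
  rfl

lemma mk_ofSL_eq_mk_ofSL_iff (γ γ' : SL(2, ℤ)) :
    Quotient.mk (colSetoid N) (ofSL N γ) = Quotient.mk (colSetoid N) (ofSL N γ') ↔
      γ⁻¹ * γ' ∈ pmGamma1 N := by
  rw [mk_eq_mk_iff, inv_mul_mem_pmGamma1_iff, reduce_ofSL, reduce_ofSL]

lemma mk_ofSL_eq_mk {v : PrimCol N} {γ : SL(2, ℤ)}
    (h₀ : ((γ 0 0 : ℤ) : ZMod N) = v.1 0) (h₁ : ((γ 1 0 : ℤ) : ZMod N) = v.1 1) :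
    Quotient.mk (colSetoid N) (ofSL N γ) = Quotient.mk (colSetoid N) v :=
  mk_eq_mk_iff.2 (Or.inl (funext (Fin.forall_fin_two.2 ⟨h₀, h₁⟩)))

end PrimCol

def cosetToPrimCol (N : ℕ) : SL(2, ℤ) ⧸ pmGamma1 N → Quotient (colSetoid N) :=
  Quotient.lift (fun γ => Quotient.mk _ (PrimCol.ofSL N γ)) fun _ _ h =>
    (PrimCol.mk_ofSL_eq_mk_ofSL_iff _ _).2 (QuotientGroup.leftRel_apply.1 h)

lemma cosetToPrimCol_bijective (N : ℕ) : Function.Bijective (cosetToPrimCol N) := by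
  constructor
  · rintro ⟨γ⟩ ⟨γ'⟩ h
    exact QuotientGroup.eq.2 ((PrimCol.mk_ofSL_eq_mk_ofSL_iff γ γ').1 h)
  · refine Quotient.ind fun v => ?_
    obtain ⟨γ, h₀, h₁⟩ := exists_SL2_col_intCast_eq N v.2
    exact ⟨γ, PrimCol.mk_ofSL_eq_mk h₀ h₁⟩

theorem primCol_equiv_cosets_general (N : ℕ) :
    ∃ e : Quotient (colSetoid N) ≃
        (Matrix.SpecialLinearGroup (Fin 2) ℤ ⧸ pmGamma1 N),
      ∀ (v : PrimCol N) (γ : Matrix.SpecialLinearGroup (Fin 2) ℤ),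
        ((γ 0 0 : ℤ) : ZMod N) = (v.1 0 : ZMod N) →
        ((γ 1 0 : ℤ) : ZMod N) = (v.1 1 : ZMod N) →
        e (Quotient.mk (colSetoid N) v) = QuotientGroup.mk γ := by
  refine ⟨(Equiv.ofBijective _ (cosetToPrimCol_bijective N)).symm, fun v γ h₀ h₁ => ?_⟩
  rw [Equiv.symm_apply_eq]
  exact (PrimCol.mk_ofSL_eq_mk h₀ h₁).symm

/-- The map sending `(a,c)` with `gcd(N,a,c)=1` to the coset of any `γ ∈ SL₂(ℤ)` whose
first column is congruent to `(a,c)` mod `N` is a well-defined bijection from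
`{(a,c) : gcd(N,a,c)=1}/±` onto `SL₂(ℤ)/±Γ₁(N)`. -/
theorem primCol_equiv_cosets (N : ℕ) (hN : 0 < N) :
    ∃ e : Quotient (colSetoid N) ≃
        (Matrix.SpecialLinearGroup (Fin 2) ℤ ⧸ pmGamma1 N),
      ∀ (v : PrimCol N) (γ : Matrix.SpecialLinearGroup (Fin 2) ℤ),
        ((γ 0 0 : ℤ) : ZMod N) = (v.1 0 : ZMod N) →
        ((γ 1 0 : ℤ) : ZMod N) = (v.1 1 : ZMod N) →
        e (Quotient.mk (colSetoid N) v) = QuotientGroup.mk γ :=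
  primCol_equiv_cosets_general N
end

section
/- Every primitive positive definite integral binary quadratic form of negative discriminant D is SL_2(ℤ)-equivalent to a reduced form of discriminant D. -/
def matT (n : ℤ) : Matrix.SpecialLinearGroup (Fin 2) ℤ :=
  ⟨!![1, n; 0, 1], by simp [Matrix.det_fin_two_of]⟩

def matS : Matrix.SpecialLinearGroup (Fin 2) ℤ :=
  ⟨!![0, -1; 1, 0], by simp [Matrix.det_fin_two_of]⟩

lemma qfVal_T (a b c n x y : ℤ) :
    qfVal a b c ((matT n) 0 0 * x + (matT n) 0 1 * y) ((matT n) 1 0 * x + (matT n) 1 1 * y)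
      = qfVal a (b + 2*a*n) (a*n^2 + b*n + c) x y := by
  simp [qfVal, matT]; ring

lemma qfVal_S (a b c x y : ℤ) :
    qfVal a b c (matS 0 0 * x + matS 0 1 * y) (matS 1 0 * x + matS 1 1 * y)
      = qfVal c (-b) a x y := by
  simp [qfVal, matS]; ring

lemma qfVal_comp {a b c a' b' c' a'' b'' c'' : ℤ}
    {γ1 γ2 : Matrix.SpecialLinearGroup (Fin 2) ℤ}
    (h1 : ∀ x y : ℤ, qfVal a b c (γ1 0 0 * x + γ1 0 1 * y) (γ1 1 0 * x + γ1 1 1 * y)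
        = qfVal a' b' c' x y)
    (h2 : ∀ x y : ℤ, qfVal a' b' c' (γ2 0 0 * x + γ2 0 1 * y) (γ2 1 0 * x + γ2 1 1 * y)
        = qfVal a'' b'' c'' x y)
    (x y : ℤ) :
    qfVal a b c ((γ1*γ2) 0 0 * x + (γ1*γ2) 0 1 * y) ((γ1*γ2) 1 0 * x + (γ1*γ2) 1 1 * y)
      = qfVal a'' b'' c'' x y := by
  have e : ∀ i j, (γ1*γ2) i j = γ1 i 0 * γ2 0 j + γ1 i 1 * γ2 1 j := by
    intro i j
    show ((γ1*γ2 : Matrix.SpecialLinearGroup (Fin 2) ℤ) : Matrix (Fin 2) (Fin 2) ℤ) i j = _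
    rw [Matrix.SpecialLinearGroup.coe_mul, Matrix.mul_apply, Fin.sum_univ_two]
  rw [e 0 0, e 0 1, e 1 0, e 1 1, ← h2 x y,
    ← h1 (γ2 0 0 * x + γ2 0 1 * y) (γ2 1 0 * x + γ2 1 1 * y)]
  congr 1 <;> ring

lemma reduce_aux : ∀ N : ℕ, ∀ a b c : ℤ, 0 < a → b ^ 2 - 4 * a * c < 0 →
    (2 * a + |b|).toNat ≤ N →
    ∃ (a' b' c' : ℤ) (γ : Matrix.SpecialLinearGroup (Fin 2) ℤ),
      (∀ x y : ℤ,
          qfVal a b c (γ 0 0 * x + γ 0 1 * y) (γ 1 0 * x + γ 1 1 * y)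
            = qfVal a' b' c' x y) ∧
      b' ^ 2 - 4 * a' * c' = b ^ 2 - 4 * a * c ∧
      |b'| ≤ a' ∧ a' ≤ c' ∧ ((|b'| = a' ∨ a' = c') → 0 ≤ b') := by
  intro N
  induction N with
  | zero =>
    intro a b c ha _ hN
    exfalso
    have : (0:ℤ) < 2 * a + |b| := by have := abs_nonneg b; omega
    omega
  | succ N ih =>
    intro a b c ha hD hN
    have hc : 0 < c := by nlinarith [sq_nonneg b]
    by_cases hba : |b| ≤ a
    · by_cases hac : a ≤ c
      · -- almost reduced; fix sign of b if needed
        by_cases hb0 : 0 ≤ b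
        · exact ⟨a, b, c, matT 0, by
            intro x y; have := qfVal_T a b c 0 x y
            simpa using this, by ring, hba, hac, fun _ => hb0⟩
        · push_neg at hb0
          by_cases hbe : b = -a
          · -- T step: (a, a, c)
            refine ⟨a, a, c, matT 1, ?_, by rw [hbe]; ring, ?_, hac, fun _ => le_of_lt ha⟩
            · intro x y
              have := qfVal_T a b c 1 x y
              rw [this]; rw [hbe]; congr 1 <;> ring
            · rw [abs_of_pos ha]
          · by_cases hae : a = c
            · -- S step: (a, -b, a)
              refine ⟨c, -b, a, matS, qfVal_S a b c, by ring, ?_, le_of_eq hae.symm, fun _ => by omega⟩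
              rw [abs_neg]; omega
            · -- strictly reduced already
              refine ⟨a, b, c, matT 0, ?_, by ring, hba, hac, ?_⟩
              · intro x y; have := qfVal_T a b c 0 x y; simpa using this
              · rintro (h | h)
                · exfalso; rw [abs_of_neg hb0] at h; exact hbe (by omega)
                · exact absurd h hae
      · -- c < a : S step and recurse
        push_neg at hac
        have hD' : (-b) ^ 2 - 4 * c * a < 0 := by nlinarith
        have hm : (2 * c + |(-b)|).toNat ≤ N := by
          rw [abs_neg]
          have h1 : 2 * c + |b| < 2 * a + |b| := by omega
          have h2 : (0:ℤ) < 2 * a + |b| := by have := abs_nonneg b; omega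
          omega
        obtain ⟨a', b', c', γ', h1, h2, h3, h4, h5⟩ := ih c (-b) a hc hD' hm
        refine ⟨a', b', c', matS * γ', qfVal_comp (qfVal_S a b c) h1, by rw [h2]; ring, h3, h4, h5⟩
    · -- |b| > a : T step and recurse
      push_neg at hba
      set q := (b + a) / (2 * a) with hq
      set r := (b + a) % (2 * a) with hr
      have h2a : (0:ℤ) < 2 * a := by omega
      have heq : 2 * a * q + r = b + a := Int.mul_ediv_add_emod (b + a) (2 * a)
      have hr0 : 0 ≤ r := Int.emod_nonneg _ (by omega)
      have hr1 : r < 2 * a := Int.emod_lt_of_pos _ h2a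
      set b2 := b + 2 * a * (-q) with hb2
      set c2 := a * (-q) ^ 2 + b * (-q) + c with hc2
      have hb2a : |b2| ≤ a := by
        have hneg : 2 * a * (-q) = -(2 * a * q) := by ring
        have : b2 = r - a := by rw [hb2, hneg]; omega
        rw [abs_le]; omega
      have hD2 : b2 ^ 2 - 4 * a * c2 < 0 := by
        have : b2 ^ 2 - 4 * a * c2 = b ^ 2 - 4 * a * c := by rw [hb2, hc2]; ring
        omega
      have hm : (2 * a + |b2|).toNat ≤ N := by
        have h1 : 2 * a + |b2| < 2 * a + |b| := by omega
        have h2 : (0:ℤ) < 2 * a + |b| := by omega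
        omega
      obtain ⟨a', b', c', γ', h1, h2, h3, h4, h5⟩ := ih a b2 c2 ha hD2 hm
      refine ⟨a', b', c', matT (-q) * γ', qfVal_comp (qfVal_T a b c (-q)) h1, ?_, h3, h4, h5⟩
      rw [h2, hb2, hc2]; ring

/-- Every primitive positive definite integral binary quadratic form of negative
discriminant is `SL₂(ℤ)`-equivalent to a reduced form. -/
theorem exists_equivalent_reduced_form (a b c : ℤ)
    (hprim : Int.gcd (Int.gcd a b) c = 1) (ha : 0 < a)
    (hDneg : b ^ 2 - 4 * a * c < 0) :
    ∃ (a' b' c' : ℤ) (γ : Matrix.SpecialLinearGroup (Fin 2) ℤ),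
      (∀ x y : ℤ,
          qfVal a b c (γ 0 0 * x + γ 0 1 * y) (γ 1 0 * x + γ 1 1 * y)
            = qfVal a' b' c' x y) ∧
      b' ^ 2 - 4 * a' * c' = b ^ 2 - 4 * a * c ∧
      |b'| ≤ a' ∧ a' ≤ c' ∧ ((|b'| = a' ∨ a' = c') → 0 ≤ b') := by
  exact reduce_aux (2 * a + |b|).toNat a b c ha hDneg le_rfl
end
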